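/- The pseudoachromatic index of the complete convex geometric graph on 4 vertices equals 5, and its achromatic index equals 4. -/

import Mathlib

open scoped Classical

abbrev Pt : Type := ℝ × ℝ

/-- No three distinct points of `S` are collinear. -/
def GenPos (S : Finset Pt) : Prop :=
  ∀ p ∈ S, ∀ q ∈ S, ∀ r ∈ S, p ≠ q → q ≠ r → p ≠ r → ¬ Collinear ℝ ({p, q, r} : Set Pt)

/-- The closed straight-line segment of an (unordered) edge. -/
noncomputable def seg2 : Sym2 Pt → Set Pt :=
  Sym2.lift ⟨fun p q => segment ℝ p q, fun p q => segment_symm ℝ p q⟩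

/-- Two edges intersect: they share a point (common endpoint or crossing). -/
def SInter (e f : Sym2 Pt) : Prop := (seg2 e ∩ seg2 f).Nonempty

/-- A geometric graph: vertices in general position, straight-line edges. -/
structure GeomGraph where
  verts : Finset Pt
  edges : Finset (Sym2 Pt)
  genpos : GenPos verts
  edge_mem : ∀ e ∈ edges, ∀ p ∈ e, p ∈ verts
  edge_ne : ∀ e ∈ edges, ¬ e.IsDiag

/-- A coloring is complete on edge set `E` if every pair of used colors appears
on a pair of intersecting edges. -/
def CompleteOn (E : Finset (Sym2 Pt)) (c : Sym2 Pt → ℕ) : Prop :=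
  ∀ i ∈ E.image c, ∀ j ∈ E.image c, i ≠ j →
    ∃ e ∈ E, ∃ f ∈ E, c e = i ∧ c f = j ∧ SInter e f

/-- A coloring is proper if same-colored edges are disjoint. -/
def ProperOn (E : Finset (Sym2 Pt)) (c : Sym2 Pt → ℕ) : Prop :=
  ∀ e ∈ E, ∀ f ∈ E, e ≠ f → c e = c f → ¬ SInter e f

/-- Points in convex position. -/
def ConvexPos (S : Finset Pt) : Prop :=
  ∀ p ∈ S, p ∉ convexHull ℝ ((S : Set Pt) \ {p})

/-- Edge set of the complete geometric graph on `S`. -/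
noncomputable def edgeSet (S : Finset Pt) : Finset (Sym2 Pt) :=
  S.sym2.filter (fun e => ¬ e.IsDiag)

def ShareEndpoint (e f : Sym2 Pt) : Prop := ∃ p : Pt, p ∈ e ∧ p ∈ f

def Crossing (e f : Sym2 Pt) : Prop := SInter e f ∧ ¬ ShareEndpoint e f

/-- Number of unordered pairs of distinct edges of `E` satisfying the
(symmetric) relation `P`. -/
noncomputable def pairCount (E : Finset (Sym2 Pt)) (P : Sym2 Pt → Sym2 Pt → Prop) : ℕ :=
  ((E ×ˢ E).filter (fun q => q.1 ≠ q.2 ∧ P q.1 q.2)).card / 2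

/-- The `k`-th vertex (clockwise) of the regular `n`-gon. -/
noncomputable def pt (n k : ℕ) : Pt :=
  (Real.cos (2 * Real.pi * k / n), -Real.sin (2 * Real.pi * k / n))

/-- Vertex set of the regular `n`-gon. -/
noncomputable def ngon (n : ℕ) : Finset Pt := (Finset.range n).image (pt n)

/-- `pq` is a halving edge of `S`: each open half-plane bounded by the line
through `p` and `q` contains at least `⌊(n-2)/2⌋` points of `S`. -/
def IsHalvingPts (S : Finset Pt) (p q : Pt) : Prop :=
  (S.card - 2) / 2 ≤ (S.filter (fun r =>
      0 < (q.1 - p.1) * (r.2 - p.2) - (q.2 - p.2) * (r.1 - p.1))).card ∧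
  (S.card - 2) / 2 ≤ (S.filter (fun r =>
      (q.1 - p.1) * (r.2 - p.2) - (q.2 - p.2) * (r.1 - p.1) < 0)).card

/-- The edge `e_{i,j}` of the regular `n`-gon is halving. -/
def Halving (n i j : ℕ) : Prop := IsHalvingPts (ngon n) (pt n i) (pt n j)

/-- The edges `e_{i,j}` and `e_{i',j'}` of the regular `n`-gon intersect. -/
def EInter (n i j i' j' : ℕ) : Prop :=
  (segment ℝ (pt n i) (pt n j) ∩ segment ℝ (pt n i') (pt n j')).Nonempty

/-- `(e_{i,j}, e_{j+1,k})` is a halving pair. -/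
def HalvingPair (n i j k : ℕ) : Prop :=
  pt n i ≠ pt n j ∧ pt n (j + 1) ≠ pt n k ∧ ¬ EInter n i j (j + 1) k ∧
  (Halving n i (j + 1) ∨ Halving n i k ∨ Halving n j k)

/-!
By Radon's theorem, four points in convex position can be labelled `a, b, c, d` so that the
diagonals `ac` and `bd` cross. Since `orient a b c - orient a b d + orient a c d - orient b c d = 0`
and the crossing makes `orient a b c, orient a c d` and `orient a b d, orient b c d` pairs of equal
sign (nonzero by general position), all four orientations have one sign; hence the opposite sides `ab, cd` and `bc, da` are
disjoint, and these are the only two disjoint pairs of edges.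

A complete coloring with six colors would have to make `ab` and `cd` meet, so at most five
colors occur, and giving `ab` and `bc` the same color realises five. In a proper complete coloring
two opposite sides of different colors would each be alone in their color class, so they would
have to meet; thus opposite sides share their colors, at most four colors occur, and coloring
exactly the opposite sides alike realises four.
-/

lemma mem_seg2_of_mem {p : Pt} {e : Sym2 Pt} (h : p ∈ e) : p ∈ seg2 e := by
  induction e using Sym2.ind with
  | h x y =>
    rcases Sym2.mem_iff.mp h with rfl | rfl
    exacts [left_mem_segment ℝ p y, right_mem_segment ℝ x p]

lemma SInter.symm {e f : Sym2 Pt} (h : SInter e f) : SInter f e :=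
  (Set.inter_comm _ _ ▸ h : (seg2 f ∩ seg2 e).Nonempty)

lemma ShareEndpoint.sInter {e f : Sym2 Pt} (h : ShareEndpoint e f) : SInter e f :=
  let ⟨p, he, hf⟩ := h
  ⟨p, mem_seg2_of_mem he, mem_seg2_of_mem hf⟩

lemma ne_of_not_sInter {e f : Sym2 Pt} (h : ¬ SInter e f) : e ≠ f := by
  rintro rfl
  induction e using Sym2.ind with
  | h x y => exact h (ShareEndpoint.sInter ⟨x, Sym2.mem_mk_left x y, Sym2.mem_mk_left x y⟩)

def orient (a b c : Pt) : ℝ := (b.1 - a.1) * (c.2 - a.2) - (b.2 - a.2) * (c.1 - a.1)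

lemma orient_rotate (a b c : Pt) : orient b c a = orient a b c := by
  simp only [orient]; ring

lemma orient_swap (a b c : Pt) : orient a c b = -orient a b c := by
  simp only [orient]; ring

lemma collinear_of_orient_eq_zero {a b c : Pt} (hab : a ≠ b) (h : orient a b c = 0) :
    Collinear ℝ ({a, b, c} : Set Pt) := by
  have hb : (b.1 - a.1) ^ 2 + (b.2 - a.2) ^ 2 ≠ 0 := by
    intro h0
    apply hab
    ext <;> nlinarith [sq_nonneg (b.1 - a.1), sq_nonneg (b.2 - a.2)]
  rw [collinear_iff_of_mem (Set.mem_insert a _)]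
  refine ⟨b - a, ?_⟩
  simp only [Set.mem_insert_iff, Set.mem_singleton_iff]
  rintro p (rfl | rfl | rfl)
  · exact ⟨0, by simp⟩
  · exact ⟨1, by simp⟩
  -- the coefficient of the orthogonal projection of `p - a` onto `b - a`
  refine ⟨((b.1 - a.1) * (p.1 - a.1) + (b.2 - a.2) * (p.2 - a.2)) /
    ((b.1 - a.1) ^ 2 + (b.2 - a.2) ^ 2), ?_⟩
  unfold orient at h
  ext <;> simp only [vadd_eq_add, Prod.fst_add, Prod.snd_add, Prod.smul_fst, Prod.smul_snd,
    Prod.fst_sub, Prod.snd_sub, smul_eq_mul] <;> field_simp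
  · linear_combination (a.2 - b.2) * h
  · linear_combination (b.1 - a.1) * h

lemma GenPos.orient_ne_zero {S : Finset Pt} (h : GenPos S) {a b c : Pt} (ha : a ∈ S)
    (hb : b ∈ S) (hc : c ∈ S) (hab : a ≠ b) (hbc : b ≠ c) (hac : a ≠ c) : orient a b c ≠ 0 :=
  fun h0 => h a ha b hb c hc hab hbc hac (collinear_of_orient_eq_zero hab h0)

lemma orient_mem_segment {a b p q x : Pt} (hx : x ∈ segment ℝ p q) :
    orient a b x ∈ segment ℝ (orient a b p) (orient a b q) := by
  obtain ⟨s, t, hs, ht, hst, rfl⟩ := hx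
  refine ⟨s, t, hs, ht, hst, ?_⟩
  simp only [orient, Prod.fst_add, Prod.snd_add, Prod.smul_fst, Prod.smul_snd, smul_eq_mul]
  linear_combination ((b.2 - a.2) * a.1 - (b.1 - a.1) * a.2) * hst

lemma orient_eq_zero_of_mem_segment {a b x : Pt} (hx : x ∈ segment ℝ a b) :
    orient a b x = 0 := by
  simpa [orient, mul_comm] using orient_mem_segment (a := a) (b := b) hx

lemma mul_nonpos_of_zero_mem_segment {𝕜 : Type*} [Field 𝕜] [LinearOrder 𝕜]
    [IsStrictOrderedRing 𝕜] {u v : 𝕜} (h : (0 : 𝕜) ∈ segment 𝕜 u v) : u * v ≤ 0 := by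
  rw [segment_eq_uIcc, Set.mem_uIcc] at h
  rcases h with ⟨hu, hv⟩ | ⟨hv, hu⟩ <;> nlinarith

lemma orient_mul_nonpos_of_sInter {a b c d : Pt} (h : SInter s(a,b) s(c,d)) :
    orient a b c * orient a b d ≤ 0 := by
  obtain ⟨x, hab, hcd⟩ := h
  have hx : orient a b x = 0 := orient_eq_zero_of_mem_segment hab
  exact mul_nonpos_of_zero_mem_segment (hx ▸ orient_mem_segment hcd)

lemma ConvexPos.two_le_ncard {S : Finset Pt} (hS : ConvexPos S) {T U : Set Pt}
    (hTU : T ∪ U = S) (hdisj : Disjoint T U) (hT : T.Finite)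
    (hmeet : (convexHull ℝ T ∩ convexHull ℝ U).Nonempty) : 2 ≤ T.ncard := by
  by_contra! hlt
  obtain ⟨x, hxT, hxU⟩ := hmeet
  rcases (Set.ncard_le_one_iff_eq hT).mp (Nat.le_of_lt_succ hlt) with rfl | ⟨p, rfl⟩
  · simp at hxT
  · rw [convexHull_singleton, Set.mem_singleton_iff] at hxT
    subst hxT
    have hxS : x ∈ (S : Set Pt) := hTU ▸ Or.inl rfl
    refine hS x hxS (convexHull_mono (show U ⊆ (S : Set Pt) \ {x} from
      fun u hu => ⟨hTU ▸ Or.inr hu, fun hux => ?_⟩) hxU)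
    exact Set.disjoint_left.mp hdisj (Set.mem_singleton x) (hux ▸ hu)

lemma ConvexPos.exists_crossing_diagonals {S : Finset Pt} (hn : S.card = 4) (hS : ConvexPos S) :
    ∃ a b c d : Pt, S = {a, b, c, d} ∧ a ≠ b ∧ a ≠ c ∧ a ≠ d ∧ b ≠ c ∧ b ≠ d ∧ c ≠ d ∧
      SInter s(a,c) s(b,d) := by
  have hdep : ¬ AffineIndependent ℝ ((↑) : S → Pt) := fun h => by
    have hle := h.card_le_finrank_succ
    have hdim : Module.finrank ℝ (vectorSpan ℝ (Set.range ((↑) : S → Pt))) ≤ 2 :=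
      (Submodule.finrank_le _).trans_eq (by simp)
    rw [Fintype.card_coe, hn] at hle
    omega
  obtain ⟨I, x, hxI, hxIc⟩ := Convex.radon_partition hdep
  set T := ((↑) : S → Pt) '' I
  set U := ((↑) : S → Pt) '' Iᶜ
  have hTU : T ∪ U = S := by
    rw [← Set.image_union, Set.union_compl_self, Set.image_univ, Subtype.range_coe]
  have hdisj : Disjoint T U := by
    rw [Set.disjoint_image_iff Subtype.val_injective]
    exact disjoint_compl_right
  have hcard : T.ncard + U.ncard = 4 := by
    rw [← Set.ncard_union_eq hdisj (Set.toFinite _) (Set.toFinite _), hTU, Set.ncard_coe_finset,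
      hn]
  have hT := hS.two_le_ncard hTU hdisj (Set.toFinite _) ⟨x, hxI, hxIc⟩
  have hU := hS.two_le_ncard (Set.union_comm _ _ ▸ hTU) hdisj.symm (Set.toFinite _)
    ⟨x, hxIc, hxI⟩
  obtain ⟨a, c, hac, hT⟩ := Set.ncard_eq_two.mp (show T.ncard = 2 by omega)
  obtain ⟨b, d, hbd, hU⟩ := Set.ncard_eq_two.mp (show U.ncard = 2 by omega)
  rw [hT, hU] at hdisj hTU
  rw [hT, convexHull_pair] at hxI
  rw [hU, convexHull_pair] at hxIc
  simp only [Set.disjoint_insert_left, Set.disjoint_singleton_left, Set.mem_insert_iff,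
    Set.mem_singleton_iff, not_or] at hdisj
  refine ⟨a, b, c, d, ?_, hdisj.1.1, hac, hdisj.1.2, fun h => hdisj.2.1 h.symm, hbd,
    hdisj.2.2, x, hxI, hxIc⟩
  rw [← Finset.coe_inj, ← hTU]
  push_cast
  ext
  simp only [Set.mem_insert_iff, Set.mem_singleton_iff, Set.mem_union]
  tauto

structure ConvexQuad (a b c d : Pt) : Prop where
  diag : SInter s(a,c) s(b,d)
  side_ab_cd : ¬ SInter s(a,b) s(c,d)
  side_bc_da : ¬ SInter s(b,c) s(d,a)

section Quadrilateral

variable {a b c d : Pt}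

lemma ConvexQuad.of_orient_ne_zero (hdiag : SInter s(a,c) s(b,d))
    (habc : orient a b c ≠ 0) (habd : orient a b d ≠ 0) (hacd : orient a c d ≠ 0)
    (hbcd : orient b c d ≠ 0) : ConvexQuad a b c d := by
  have hsplit : orient a b c - orient a b d + orient a c d - orient b c d = 0 := by
    simp only [orient]; ring
  have hac : 0 < orient a b c * orient a c d := by
    have h := orient_mul_nonpos_of_sInter hdiag
    rw [orient_swap a b c, neg_mul] at h
    exact lt_of_le_of_ne (by linarith) (mul_ne_zero habc hacd).symm
  have hbd : 0 < orient a b d * orient b c d := by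
    have h := orient_mul_nonpos_of_sInter hdiag.symm
    rw [orient_rotate a b d, orient_swap b c d, mul_neg] at h
    exact lt_of_le_of_ne (by linarith) (mul_ne_zero habd hbcd).symm
  have hsame : 0 < orient a b c * orient a b d ∧ 0 < orient a b c * orient b c d := by
    rcases mul_pos_iff.mp hac with ⟨h1, h3⟩ | ⟨h1, h3⟩ <;>
      rcases mul_pos_iff.mp hbd with ⟨h2, h4⟩ | ⟨h2, h4⟩ <;>
      constructor <;> nlinarith
  refine ⟨hdiag, fun h => ?_, fun h => ?_⟩
  · exact (orient_mul_nonpos_of_sInter h).not_gt hsame.1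
  · have h' := orient_mul_nonpos_of_sInter h
    rw [orient_rotate a b c, mul_comm] at h'
    exact h'.not_gt hsame.2

lemma ConvexQuad.of_genPos (hgp : GenPos {a, b, c, d}) (hab : a ≠ b) (hac : a ≠ c) (had : a ≠ d)
    (hbc : b ≠ c) (hbd : b ≠ d) (hcd : c ≠ d) (hdiag : SInter s(a,c) s(b,d)) :
    ConvexQuad a b c d :=
  .of_orient_ne_zero hdiag (hgp.orient_ne_zero (by simp) (by simp) (by simp) hab hbc hac)
    (hgp.orient_ne_zero (by simp) (by simp) (by simp) hab hbd had)
    (hgp.orient_ne_zero (by simp) (by simp) (by simp) hac hcd had)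
    (hgp.orient_ne_zero (by simp) (by simp) (by simp) hbc hcd hbd)

lemma ConvexQuad.ne (Q : ConvexQuad a b c d) :
    a ≠ b ∧ a ≠ c ∧ a ≠ d ∧ b ≠ c ∧ b ≠ d ∧ c ≠ d := by
  refine ⟨?_, ?_, ?_, ?_, ?_, ?_⟩ <;> rintro rfl <;>
  first
    | (apply Q.side_ab_cd; apply ShareEndpoint.sInter; simp [ShareEndpoint]; done)
    | (apply Q.side_bc_da; apply ShareEndpoint.sInter; simp [ShareEndpoint])

end Quadrilateral

section Colorings

variable {E : Finset (Sym2 Pt)} {col : Sym2 Pt → ℕ} {e f : Sym2 Pt}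

lemma CompleteOn.sInter_of_unique_color (hC : CompleteOn E col) (he : e ∈ E) (hf : f ∈ E)
    (hef : col e ≠ col f) (hue : ∀ g ∈ E, col g = col e → g = e)
    (huf : ∀ g ∈ E, col g = col f → g = f) : SInter e f := by
  obtain ⟨e', he', f', hf', hce, hcf, h⟩ :=
    hC _ (Finset.mem_image_of_mem col he) _ (Finset.mem_image_of_mem col hf) hef
  rwa [hue e' he' hce, huf f' hf' hcf] at h

lemma color_eq_of_properOn_of_completeOn (hP : ProperOn E col) (hC : CompleteOn E col)
    (he : e ∈ E) (hf : f ∈ E) (hef : ¬ SInter e f)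
    (hmeet : ∀ g ∈ E, g ≠ e → g ≠ f → SInter g e ∧ SInter g f) : col e = col f := by
  by_contra hne
  refine hef (hC.sInter_of_unique_color he hf hne (fun g hgE hge => ?_) (fun g hgE hgf => ?_))
  · by_contra hg
    have hgf : g ≠ f := by rintro rfl; exact hne hge.symm
    exact hP g hgE e he hg hge (hmeet g hgE hg hgf).1
  · by_contra hg
    have hge : g ≠ e := by rintro rfl; exact hne hgf
    exact hP g hgE f hf hg hgf (hmeet g hgE hge hg).2

end Colorings

section QuadEdges

variable {a b c d : Pt}

noncomputable def quadEdges (a b c d : Pt) : Finset (Sym2 Pt) :=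
  {s(a,b), s(b,c), s(c,d), s(d,a), s(a,c), s(b,d)}

lemma edgeSet_eq_quadEdges (hab : a ≠ b) (hac : a ≠ c) (had : a ≠ d) (hbc : b ≠ c)
    (hbd : b ≠ d) (hcd : c ≠ d) : edgeSet {a, b, c, d} = quadEdges a b c d := by
  simp only [edgeSet, quadEdges, Finset.sym2_insert, Finset.image_insert, Finset.image_singleton,
    Finset.sym2_singleton, Finset.insert_union, Finset.singleton_union, Finset.union_insert,
    Finset.filter_insert, Sym2.mk_isDiag_iff, Finset.filter_singleton, Sym2.diag_isDiag,
    insert_empty_eq, hab, hac, had, hbc, hbd, hcd, not_true_eq_false, not_false_eq_true, if_true,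
    if_false]
  ext e
  simp only [Finset.mem_insert, Finset.mem_singleton, Sym2.eq_swap (a := d)]
  tauto

lemma quadEdges_rotate (a b c d : Pt) : quadEdges b c d a = quadEdges a b c d := by
  ext e
  simp only [quadEdges, Finset.mem_insert, Finset.mem_singleton, Sym2.eq_swap (a := c) (b := a)]
  tauto

lemma quadEdges_shareEndpoint {g : Sym2 Pt} (hg : g ∈ quadEdges a b c d) (hab : g ≠ s(a,b))
    (hcd : g ≠ s(c,d)) : ShareEndpoint g s(a,b) ∧ ShareEndpoint g s(c,d) := by
  simp only [quadEdges, Finset.mem_insert, Finset.mem_singleton] at hg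
  rcases hg with rfl | rfl | rfl | rfl | rfl | rfl <;>
    first | contradiction | constructor <;> simp [ShareEndpoint]

lemma color_opposite_sides_eq {col : Sym2 Pt → ℕ} (hP : ProperOn (quadEdges a b c d) col)
    (hC : CompleteOn (quadEdges a b c d) col) (h : ¬ SInter s(a,b) s(c,d)) :
    col s(a,b) = col s(c,d) :=
  color_eq_of_properOn_of_completeOn hP hC (by simp [quadEdges]) (by simp [quadEdges]) h
    fun _ hg hab hcd =>
      (quadEdges_shareEndpoint hg hab hcd).imp ShareEndpoint.sInter ShareEndpoint.sInter

lemma ConvexQuad.sInter_or_opposite_sides (Q : ConvexQuad a b c d) {e f : Sym2 Pt}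
    (he : e ∈ quadEdges a b c d) (hf : f ∈ quadEdges a b c d) :
    SInter e f ∨ (e = s(a,b) ∧ f = s(c,d)) ∨ (e = s(c,d) ∧ f = s(a,b)) ∨
      (e = s(b,c) ∧ f = s(d,a)) ∨ (e = s(d,a) ∧ f = s(b,c)) := by
  simp only [quadEdges, Finset.mem_insert, Finset.mem_singleton] at he hf
  rcases he with rfl | rfl | rfl | rfl | rfl | rfl <;>
    rcases hf with rfl | rfl | rfl | rfl | rfl | rfl <;>
    first
      | (left; apply ShareEndpoint.sInter; simp [ShareEndpoint]; done)
      | exact Or.inl Q.diag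
      | exact Or.inl Q.diag.symm
      | simp

lemma ConvexQuad.completeOn_of_opposite_sides (Q : ConvexQuad a b c d) {col : Sym2 Pt → ℕ}
    (h₁ : col s(a,b) ≠ col s(c,d) → ∃ e ∈ quadEdges a b c d, ∃ f ∈ quadEdges a b c d,
      col e = col s(a,b) ∧ col f = col s(c,d) ∧ SInter e f)
    (h₂ : col s(b,c) ≠ col s(d,a) → ∃ e ∈ quadEdges a b c d, ∃ f ∈ quadEdges a b c d,
      col e = col s(b,c) ∧ col f = col s(d,a) ∧ SInter e f) :
    CompleteOn (quadEdges a b c d) col := by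
  rintro _ he' _ hf' hne
  obtain ⟨e, he, rfl⟩ := Finset.mem_image.mp he'
  obtain ⟨f, hf, rfl⟩ := Finset.mem_image.mp hf'
  rcases Q.sInter_or_opposite_sides he hf with
    h | ⟨rfl, rfl⟩ | ⟨rfl, rfl⟩ | ⟨rfl, rfl⟩ | ⟨rfl, rfl⟩
  · exact ⟨e, he, f, hf, rfl, rfl, h⟩
  · exact h₁ hne
  · obtain ⟨e, he, f, hf, hce, hcf, h⟩ := h₁ hne.symm
    exact ⟨f, hf, e, he, hcf, hce, h.symm⟩
  · exact h₂ hne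
  · obtain ⟨e, he, f, hf, hce, hcf, h⟩ := h₂ hne.symm
    exact ⟨f, hf, e, he, hcf, hce, h.symm⟩

noncomputable def fiveColoring (a b c d : Pt) (e : Sym2 Pt) : ℕ :=
  if e = s(a,b) ∨ e = s(b,c) then 0 else if e = s(c,d) then 1 else if e = s(d,a) then 2
  else if e = s(a,c) then 3 else 4

noncomputable def fourColoring (a b c d : Pt) (e : Sym2 Pt) : ℕ :=
  if e = s(a,b) ∨ e = s(c,d) then 0 else if e = s(b,c) ∨ e = s(d,a) then 1
  else if e = s(a,c) then 2 else 3

lemma ConvexQuad.exists_completeOn_card_eq_five (Q : ConvexQuad a b c d) :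
    ∃ col : Sym2 Pt → ℕ, CompleteOn (quadEdges a b c d) col ∧
      ((quadEdges a b c d).image col).card = 5 := by
  obtain ⟨hab, hac, had, hbc, hbd, hcd⟩ := Q.ne
  refine ⟨fiveColoring a b c d, Q.completeOn_of_opposite_sides (fun _ => ?_) (fun _ => ?_), ?_⟩
  · exact ⟨s(b,c), by simp [quadEdges], s(c,d), by simp [quadEdges], by simp [fiveColoring], rfl,
      ShareEndpoint.sInter ⟨c, by simp, by simp⟩⟩
  · exact ⟨s(a,b), by simp [quadEdges], s(d,a), by simp [quadEdges], by simp [fiveColoring], rfl,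
      ShareEndpoint.sInter ⟨a, by simp, by simp⟩⟩
  · simp [quadEdges, fiveColoring, Sym2.eq_swap, *, Ne.symm]

lemma ConvexQuad.card_image_le_five (Q : ConvexQuad a b c d) {col : Sym2 Pt → ℕ}
    (hC : CompleteOn (quadEdges a b c d) col) : ((quadEdges a b c d).image col).card ≤ 5 := by
  by_contra! h
  have hinj : Set.InjOn col (quadEdges a b c d) :=
    Finset.card_image_iff.mp (le_antisymm Finset.card_image_le (Finset.card_le_six.trans h))
  have hab : s(a,b) ∈ quadEdges a b c d := by simp [quadEdges]
  have hcd : s(c,d) ∈ quadEdges a b c d := by simp [quadEdges]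
  refine Q.side_ab_cd (hC.sInter_of_unique_color hab hcd ?_ (fun g hg h => hinj hg hab h)
    (fun g hg h => hinj hg hcd h))
  exact fun h => ne_of_not_sInter Q.side_ab_cd (hinj hab hcd h)

lemma ConvexQuad.exists_properOn_completeOn_card_eq_four (Q : ConvexQuad a b c d) :
    ∃ col : Sym2 Pt → ℕ, ProperOn (quadEdges a b c d) col ∧
      CompleteOn (quadEdges a b c d) col ∧ ((quadEdges a b c d).image col).card = 4 := by
  obtain ⟨hab, hac, had, hbc, hbd, hcd⟩ := Q.ne
  refine ⟨fourColoring a b c d, ?_,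
    Q.completeOn_of_opposite_sides (fun h => absurd (by simp [fourColoring]) h)
      (fun h => absurd (by simp [fourColoring, *, Ne.symm]) h), ?_⟩
  · intro e he f hf hne hcol
    simp only [quadEdges, Finset.mem_insert, Finset.mem_singleton] at he hf
    rcases he with rfl | rfl | rfl | rfl | rfl | rfl <;>
      rcases hf with rfl | rfl | rfl | rfl | rfl | rfl <;>
      first
        | exact absurd rfl hne
        | exact Q.side_ab_cd
        | exact fun h => Q.side_ab_cd h.symm
        | exact Q.side_bc_da
        | exact fun h => Q.side_bc_da h.symm
        | simp [fourColoring, Sym2.eq_swap, *, Ne.symm] at hcol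
  · simp [quadEdges, fourColoring, Sym2.eq_swap, *, Ne.symm]

lemma ConvexQuad.card_image_le_four (Q : ConvexQuad a b c d) {col : Sym2 Pt → ℕ}
    (hP : ProperOn (quadEdges a b c d) col) (hC : CompleteOn (quadEdges a b c d) col) :
    ((quadEdges a b c d).image col).card ≤ 4 := by
  have h₁ : col s(a,b) = col s(c,d) := color_opposite_sides_eq hP hC Q.side_ab_cd
  have h₂ : col s(b,c) = col s(d,a) := color_opposite_sides_eq
    (quadEdges_rotate a b c d ▸ hP) (quadEdges_rotate a b c d ▸ hC) Q.side_bc_da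
  refine (Finset.card_le_card (t := {col s(a,b), col s(b,c), col s(a,c), col s(b,d)}) ?_).trans
    Finset.card_le_four
  intro x hx
  obtain ⟨e, he, rfl⟩ := Finset.mem_image.mp hx
  simp only [quadEdges, Finset.mem_insert, Finset.mem_singleton] at he
  rcases he with rfl | rfl | rfl | rfl | rfl | rfl <;> simp [h₁, h₂]

end QuadEdges

/-- For the complete convex geometric graph on 4 vertices, the pseudoachromatic index
equals 5 and the achromatic index equals 4. -/
theorem k4_indices (S : Finset Pt) (hn : S.card = 4) (hgp : GenPos S)
    (hconv : ConvexPos S) :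
    ((∃ c : Sym2 Pt → ℕ, CompleteOn (edgeSet S) c ∧ ((edgeSet S).image c).card = 5) ∧
     (∀ c : Sym2 Pt → ℕ, CompleteOn (edgeSet S) c → ((edgeSet S).image c).card ≤ 5)) ∧
    ((∃ c : Sym2 Pt → ℕ, ProperOn (edgeSet S) c ∧ CompleteOn (edgeSet S) c ∧
        ((edgeSet S).image c).card = 4) ∧
     (∀ c : Sym2 Pt → ℕ, ProperOn (edgeSet S) c → CompleteOn (edgeSet S) c →
        ((edgeSet S).image c).card ≤ 4)) := by
  obtain ⟨a, b, c, d, rfl, hab, hac, had, hbc, hbd, hcd, hdiag⟩ :=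
    hconv.exists_crossing_diagonals hn
  have Q := ConvexQuad.of_genPos hgp hab hac had hbc hbd hcd hdiag
  rw [edgeSet_eq_quadEdges hab hac had hbc hbd hcd]
  exact ⟨⟨Q.exists_completeOn_card_eq_five, fun _ => Q.card_image_le_five⟩,
    Q.exists_properOn_completeOn_card_eq_four, fun _ => Q.card_image_le_four⟩
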